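/- arXiv:0801.4159 — 4 statements merged into one kernel-verified Lean document; each statement's English description precedes it below -/
import Mathlib

section
/- ∫₀^∞ (tanh(t/2)/t) e^{−t} dt = ln(π/2). -/
/-!
With `x = e^{-t}` one has `tanh (t/2) = (1 - x) / (1 + x)`, so the integrand expands as
`∑ₙ t⁻¹ (x^{2n+1} - 2 x^{2n+2} + x^{2n+3})`, a series of nonnegative terms. Each term is a
difference of two Frullani integrals `∫ t⁻¹ (e^{-at} - e^{-bt}) = log (b / a)`, so the `n`-th term
integrates to the logarithm of the `n`-th Wallis factor `(2n+2)² / ((2n+1)(2n+3))`, and the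
Wallis product sums these logarithms to `log (π / 2)`.
-/

open Real MeasureTheory Set Filter Topology

lemma integral_eq_of_hasSum_integral_of_nonneg {α ι : Type*} [MeasurableSpace α] {μ : Measure α}
    [Countable ι] {F : ι → α → ℝ} {f : α → ℝ} {I : ℝ}
    (hF_int : ∀ i, Integrable (F i) μ) (hF_nonneg : ∀ i, 0 ≤ᵐ[μ] F i)
    (hF_sum : ∀ᵐ x ∂μ, HasSum (F · x) (f x)) (hI : HasSum (fun i ↦ ∫ x, F i x ∂μ) I) :
    ∫ x, f x ∂μ = I := by
  have hnorm : ∀ i, ∫ x, ‖F i x‖ ∂μ = ∫ x, F i x ∂μ := fun i ↦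
    integral_congr_ae <| (hF_nonneg i).mono fun x hx ↦ norm_of_nonneg hx
  have hsum := hasSum_integral_of_summable_integral_norm hF_int
    (by simpa only [hnorm] using hI.summable)
  rw [integral_congr_ae (hF_sum.mono fun x hx ↦ hx.tsum_eq.symm)]
  exact hsum.unique hI

lemma hasSum_log_of_tendsto_prod {f : ℕ → ℝ} {p : ℝ} (hf : ∀ n, 1 ≤ f n)
    (hp : Tendsto (fun k ↦ ∏ i ∈ Finset.range k, f i) atTop (𝓝 p)) :
    HasSum (fun n ↦ log (f n)) (log p) := by
  have hp_pos : 0 < p :=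
    one_pos.trans_le <| ge_of_tendsto' hp fun k ↦ Finset.one_le_prod fun i _ ↦ hf i
  rw [hasSum_iff_tendsto_nat_of_nonneg (fun n ↦ log_nonneg (hf n))]
  have hlog : ∀ k, ∑ i ∈ Finset.range k, log (f i) = log (∏ i ∈ Finset.range k, f i) := fun k ↦
    (log_prod fun i _ ↦ (one_pos.trans_le (hf i)).ne').symm
  exact ((continuousAt_log hp_pos.ne').tendsto.comp hp).congr fun k ↦ (hlog k).symm

section Frullani

variable {a b : ℝ}

lemma integrableOn_inv_mul_exp_neg_sub (ha : 0 < a) (hab : a ≤ b) :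
    IntegrableOn (fun t ↦ t⁻¹ * (exp (-(a * t)) - exp (-(b * t)))) (Ioi 0) := by
  have hdom : IntegrableOn (fun t ↦ (b - a) * exp (-(a * t))) (Ioi 0) := by
    simpa only [neg_mul, IntegrableOn] using (exp_neg_integrableOn_Ioi 0 ha).const_mul (b - a)
  refine hdom.mono' ((ContinuousOn.mul (continuousOn_inv₀.mono fun t ht ↦ ne_of_gt ht)
    (by fun_prop)).aestronglyMeasurable measurableSet_Ioi) ?_
  filter_upwards [ae_restrict_mem measurableSet_Ioi] with t (ht : 0 < t)
  -- `e^{-at} - e^{-bt} = e^{-at} (1 - e^{-(b-a)t}) ≤ e^{-at} (b - a) t`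
  have hsplit : exp (-(b * t)) = exp (-(a * t)) * exp (-((b - a) * t)) := by
    rw [← exp_add]; ring_nf
  have hlin : 1 - (b - a) * t ≤ exp (-((b - a) * t)) := by
    linarith [add_one_le_exp (-((b - a) * t))]
  have hmono : exp (-(b * t)) ≤ exp (-(a * t)) := exp_le_exp.2 (by nlinarith)
  rw [norm_of_nonneg (mul_nonneg (inv_nonneg.2 ht.le) (sub_nonneg.2 hmono)), inv_mul_le_iff₀ ht]
  nlinarith [exp_pos (-(a * t))]

lemma integral_inv_mul_exp_neg_sub (ha : 0 < a) (hab : a ≤ b) :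
    ∫ t in Ioi 0, t⁻¹ * (exp (-(a * t)) - exp (-(b * t))) = log (b / a) := by
  have hL : Tendsto (fun x : ℝ ↦ exp (-x)) (𝓝[>] 0) (𝓝 1) := by
    simpa using ((by fun_prop : Continuous fun x : ℝ ↦ exp (-x)).tendsto 0).mono_left
      nhdsWithin_le_nhds
  simpa using Frullani.integral_Ioi_eq (L := 1) (R := 0)
    ((by fun_prop : Continuous fun x : ℝ ↦ exp (-x)).locallyIntegrable.locallyIntegrableOn _)
    ha (ha.trans_le hab) hL tendsto_exp_neg_atTop_nhds_zero
    (integrableOn_inv_mul_exp_neg_sub ha hab)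

end Frullani

lemma tanh_half_eq (t : ℝ) : tanh (t / 2) = (1 - exp (-t)) / (1 + exp (-t)) := by
  have hsq : exp (t / 2) * exp (-t) = exp (-t / 2) := by rw [← exp_add]; ring_nf
  have h₁ : 0 < exp (t / 2) + exp (-(t / 2)) := by positivity
  have h₂ : 0 < 1 + exp (-t) := by positivity
  rw [tanh_eq, div_eq_div_iff h₁.ne' h₂.ne']
  rw [neg_div] at hsq
  linear_combination 2 * hsq

noncomputable def tanhHalfSeriesTerm (n : ℕ) (t : ℝ) : ℝ :=
  t⁻¹ * (exp (-((2 * n + 1) * t)) - exp (-((2 * n + 2) * t)))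
    - t⁻¹ * (exp (-((2 * n + 2) * t)) - exp (-((2 * n + 3) * t)))

lemma tanhHalfSeriesTerm_eq (n : ℕ) (t : ℝ) :
    tanhHalfSeriesTerm n t = (exp (-t) ^ 2) ^ n * (t⁻¹ * exp (-t) * (1 - exp (-t)) ^ 2) := by
  have hpow : ∀ k : ℕ, exp (-((2 * n + k) * t)) = exp (-t) ^ (2 * n + k) := fun k ↦ by
    rw [← exp_nat_mul]; push_cast; ring_nf
  have h₁ := hpow 1; have h₂ := hpow 2; have h₃ := hpow 3
  push_cast at h₁ h₂ h₃
  rw [tanhHalfSeriesTerm, h₁, h₂, h₃]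
  ring

lemma tanhHalfSeriesTerm_nonneg (n : ℕ) {t : ℝ} (ht : 0 < t) : 0 ≤ tanhHalfSeriesTerm n t := by
  rw [tanhHalfSeriesTerm_eq]; positivity

lemma hasSum_tanhHalfSeriesTerm {t : ℝ} (ht : 0 < t) :
    HasSum (tanhHalfSeriesTerm · t) (tanh (t / 2) / t * exp (-t)) := by
  have hx₀ : 0 < exp (-t) := exp_pos _
  have hx₁ : exp (-t) < 1 := exp_lt_one_iff.2 (neg_lt_zero.2 ht)
  have hgeom := (hasSum_geometric_of_lt_one (sq_nonneg (exp (-t))) (by nlinarith)).mul_right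
    (t⁻¹ * exp (-t) * (1 - exp (-t)) ^ 2)
  have hsum : tanh (t / 2) / t * exp (-t)
      = (1 - exp (-t) ^ 2)⁻¹ * (t⁻¹ * exp (-t) * (1 - exp (-t)) ^ 2) := by
    have : 1 - exp (-t) ^ 2 ≠ 0 := by nlinarith
    rw [tanh_half_eq]
    field_simp
    ring
  simpa only [hsum, tanhHalfSeriesTerm_eq] using hgeom

lemma integrableOn_tanhHalfSeriesTerm (n : ℕ) : IntegrableOn (tanhHalfSeriesTerm n) (Ioi 0) :=
  (integrableOn_inv_mul_exp_neg_sub (by positivity) (by linarith)).sub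
    (integrableOn_inv_mul_exp_neg_sub (by positivity) (by linarith))

lemma integral_tanhHalfSeriesTerm (n : ℕ) :
    ∫ t in Ioi 0, tanhHalfSeriesTerm n t
      = log ((2 * n + 2) / (2 * n + 1) * ((2 * n + 2) / (2 * n + 3))) := by
  simp only [tanhHalfSeriesTerm]
  rw [integral_sub (integrableOn_inv_mul_exp_neg_sub (by positivity) (by linarith))
    (integrableOn_inv_mul_exp_neg_sub (by positivity) (by linarith)),
    integral_inv_mul_exp_neg_sub (by positivity) (by linarith),
    integral_inv_mul_exp_neg_sub (by positivity) (by linarith),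
    log_mul (by positivity) (by positivity)]
  have h₁ : (2 * n + 1 : ℝ) ≠ 0 := by positivity
  have h₂ : (2 * n + 2 : ℝ) ≠ 0 := by positivity
  have h₃ : (2 * n + 3 : ℝ) ≠ 0 := by positivity
  rw [log_div h₂ h₁, log_div h₃ h₂, log_div h₂ h₃]
  ring

lemma one_le_wallis_factor (n : ℕ) :
    1 ≤ ((2 : ℝ) * n + 2) / (2 * n + 1) * ((2 * n + 2) / (2 * n + 3)) := by
  rw [div_mul_div_comm, one_le_div (by positivity)]
  nlinarith

theorem stmt_4 :
    ∫ t in Set.Ioi (0:ℝ), (Real.tanh (t / 2) / t) * Real.exp (-t)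
      = Real.log (Real.pi / 2) := by
  refine integral_eq_of_hasSum_integral_of_nonneg integrableOn_tanhHalfSeriesTerm
    (fun n ↦ ae_restrict_of_forall_mem measurableSet_Ioi fun t ht ↦ tanhHalfSeriesTerm_nonneg n ht)
    (ae_restrict_of_forall_mem measurableSet_Ioi fun t ht ↦ hasSum_tanhHalfSeriesTerm ht) ?_
  simpa only [integral_tanhHalfSeriesTerm]
    using hasSum_log_of_tendsto_prod one_le_wallis_factor tendsto_prod_pi_div_two
end

section
/- As ϑ → 0⁺, the quantity m̃_μ(ϑ) := (1/(4πμ)) ∫_{ℝ³} (1/√((|p|² − μ)² + ϑ²) − 1/|p|²) dp satisfies m̃_μ(ϑ) = μ^{−1/2}(ln(μ/ϑ) − 2 + ln 8 + o(1)). -/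
/-!
In spherical coordinates, and after the substitution `|p| = √μ t`, one gets
`m̃_μ(ϑ) = μ^{-1/2} F(ϑ/μ)` with `F(ε) = ∫₀^∞ (t² / E_ε(t) - 1) dt`, `E_ε(t) = √((t² - 1)² + ε²)`.
The logarithm comes from the Fermi surface `t = 1`. On `(0, √2]` the term `t / E_ε` has the
primitive `arsinh ((t² - 1) / ε) / 2`, so it integrates to `arsinh (1/ε) = -log ε + log 2 + o(1)`.
What remains, `(t² - t) / E_ε - 1` on `(0, √2]` and `t² / E_ε - 1` on `(√2, ∞)`, is dominated
uniformly in `ε` (by `2` and by `1 / (t² - 1)`), so dominated convergence gives the limits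
`2 log 2 - 2 - log (1 + √2)` and `log (1 + √2)`.
-/

open Real Filter MeasureTheory

noncomputable def mTilde (μ ϑ : ℝ) : ℝ :=
  (1 / (4 * Real.pi * μ)) *
    ∫ p : EuclideanSpace ℝ (Fin 3),
      (1 / Real.sqrt ((‖p‖ ^ 2 - μ) ^ 2 + ϑ ^ 2) - 1 / ‖p‖ ^ 2)

open Set Topology

theorem integral_fun_norm_euclideanSpace_fin_three {F : Type*} [NormedAddCommGroup F]
    [NormedSpace ℝ F] (f : ℝ → F) :
    ∫ p : EuclideanSpace ℝ (Fin 3), f ‖p‖ = (4 * π) • ∫ r in Ioi (0 : ℝ), r ^ 2 • f r := by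
  rw [integral_fun_norm_addHaar, measureReal_def, EuclideanSpace.volume_ball_fin_three]
  simp only [finrank_euclideanSpace_fin, ENNReal.ofReal_one, one_pow, one_mul,
    ENNReal.toReal_ofReal (by positivity : 0 ≤ π * 4 / 3)]
  rw [← Nat.cast_smul_eq_nsmul ℝ, smul_smul]
  norm_num
  ring_nf

theorem integral_inv_one_add {a b : ℝ} (ha : -1 < a) (hb : -1 < b) :
    ∫ t in a..b, (1 + t)⁻¹ = log ((1 + b) / (1 + a)) := by
  rw [intervalIntegral.integral_comp_add_left (fun t => t⁻¹),
    integral_inv_of_pos (by linarith) (by linarith)]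

theorem hasDerivAt_log_sub_one_div_add_one {t : ℝ} (ht : 1 < t) :
    HasDerivAt (fun t => log ((t - 1) / (t + 1)) / 2) (t ^ 2 - 1)⁻¹ t := by
  have h := ((((hasDerivAt_id' t).sub_const 1).fun_div ((hasDerivAt_id' t).add_const 1)
    (by linarith)).log (div_pos (by linarith) (by linarith)).ne').div_const 2
  refine h.congr_deriv ?_
  have : t - 1 ≠ 0 := by linarith
  have : t + 1 ≠ 0 := by linarith
  have : t ^ 2 - 1 ≠ 0 := by nlinarith
  field_simp
  ring

theorem tendsto_log_sub_one_div_add_one_atTop :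
    Tendsto (fun t : ℝ => log ((t - 1) / (t + 1)) / 2) atTop (𝓝 0) := by
  have h : Tendsto (fun t : ℝ => (1 - t⁻¹) / (1 + t⁻¹)) atTop (𝓝 ((1 - 0) / (1 + 0))) :=
    (tendsto_const_nhds.sub tendsto_inv_atTop_zero).div
      (tendsto_const_nhds.add tendsto_inv_atTop_zero) (by norm_num)
  have h := ((continuousAt_log (by norm_num)).tendsto.comp h).div_const 2
  norm_num at h
  refine h.congr' ?_
  filter_upwards [eventually_gt_atTop 0] with t ht
  congr 2
  field_simp

theorem integrableOn_Ioi_inv_sq_sub_one {a : ℝ} (ha : 1 < a) :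
    IntegrableOn (fun t : ℝ => (t ^ 2 - 1)⁻¹) (Ioi a) :=
  integrableOn_Ioi_deriv_of_nonneg'
    (fun t ht => hasDerivAt_log_sub_one_div_add_one (ha.trans_le ht))
    (fun t ht => inv_nonneg.2 (by nlinarith [mem_Ioi.1 ht])) tendsto_log_sub_one_div_add_one_atTop

theorem integral_Ioi_inv_sq_sub_one {a : ℝ} (ha : 1 < a) :
    ∫ t in Ioi a, (t ^ 2 - 1)⁻¹ = log ((a + 1) / (a - 1)) / 2 := by
  rw [integral_Ioi_of_hasDerivAt_of_nonneg'
    (fun t ht => hasDerivAt_log_sub_one_div_add_one (ha.trans_le ht))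
    (fun t ht => inv_nonneg.2 (by nlinarith [mem_Ioi.1 ht])) tendsto_log_sub_one_div_add_one_atTop,
    zero_sub, ← neg_div, ← log_inv, inv_div]

namespace MTilde

noncomputable def energy (ε t : ℝ) : ℝ := √((t ^ 2 - 1) ^ 2 + ε ^ 2)

noncomputable def radialIntegral (ε : ℝ) : ℝ := ∫ t in Ioi 0, (t ^ 2 / energy ε t - 1)

variable {ε t : ℝ}

theorem energy_pos (hε : ε ≠ 0) : 0 < energy ε t := sqrt_pos.2 (by positivity)

theorem abs_le_energy : |t ^ 2 - 1| ≤ energy ε t := by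
  rw [energy, ← sqrt_sq_eq_abs]
  exact sqrt_le_sqrt (le_add_of_nonneg_right (sq_nonneg ε))

theorem energy_zero_left : energy 0 t = |t ^ 2 - 1| := by
  simp [energy, sqrt_sq_eq_abs]

@[fun_prop]
theorem _root_.Continuous.energy {α : Type*} [TopologicalSpace α] {f g : α → ℝ}
    (hf : Continuous f) (hg : Continuous g) : Continuous fun x => energy (f x) (g x) := by
  simp only [MTilde.energy]
  fun_prop

theorem mul_energy_div {μ : ℝ} (hμ : 0 < μ) (ϑ t : ℝ) :
    μ * energy (ϑ / μ) t = √((μ * t ^ 2 - μ) ^ 2 + ϑ ^ 2) := by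
  have h : (μ * t ^ 2 - μ) ^ 2 + ϑ ^ 2 = μ ^ 2 * ((t ^ 2 - 1) ^ 2 + (ϑ / μ) ^ 2) := by
    field_simp
  rw [energy, h, sqrt_mul (sq_nonneg μ), sqrt_sq hμ.le]

theorem hasDerivAt_arsinh_div (hε : 0 < ε) (t : ℝ) :
    HasDerivAt (fun t => arsinh ((t ^ 2 - 1) / ε) / 2) (t / energy ε t) t := by
  have h := (((hasDerivAt_pow 2 t).sub_const 1).div_const ε).arsinh.div_const 2
  refine h.congr_deriv ?_
  have hsq : √(1 + ((t ^ 2 - 1) / ε) ^ 2) = energy ε t / ε := by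
    rw [energy, eq_div_iff hε.ne', ← sqrt_sq hε.le, ← sqrt_mul (by positivity), sqrt_sq hε.le]
    congr 1
    field_simp
    ring
  have := (energy_pos (t := t) hε.ne').ne'
  have := hε.ne'
  rw [hsq, smul_eq_mul]
  field_simp
  ring

theorem integral_div_energy (hε : 0 < ε) : ∫ t in 0..√2, t / energy ε t = arsinh ε⁻¹ := by
  rw [intervalIntegral.integral_eq_sub_of_hasDerivAt (fun t _ => hasDerivAt_arsinh_div hε t)
    ((continuous_id.div (by fun_prop) fun t => (energy_pos hε.ne').ne').intervalIntegrable _ _)]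
  norm_num
  rw [neg_div, arsinh_neg, one_div]
  ring

theorem arsinh_inv_add_log (hε : 0 < ε) : arsinh ε⁻¹ + log ε = log (1 + √(1 + ε ^ 2)) := by
  have hsq : ε * √(1 + ε⁻¹ ^ 2) = √(1 + ε ^ 2) := by
    rw [← sqrt_sq hε.le, ← sqrt_mul (sq_nonneg ε), sqrt_sq hε.le]
    congr 1
    field_simp
    ring
  rw [arsinh, ← log_mul (by positivity) hε.ne', add_mul, inv_mul_cancel₀ hε.ne', mul_comm, hsq]

theorem tendsto_arsinh_inv_add_log :
    Tendsto (fun ε => arsinh ε⁻¹ + log ε) (𝓝[>] 0) (𝓝 (log 2)) := by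
  have hcont : ContinuousAt (fun ε : ℝ => log (1 + √(1 + ε ^ 2))) 0 :=
    ContinuousAt.log (by fun_prop) (by norm_num)
  have h := hcont.tendsto.mono_left (nhdsWithin_le_nhds (s := Ioi 0))
  norm_num at h
  refine h.congr' ?_
  filter_upwards [self_mem_nhdsWithin] with ε hε
  exact (arsinh_inv_add_log hε).symm

theorem tendsto_energy (t : ℝ) : Tendsto (fun ε => energy ε t) (𝓝 0) (𝓝 |t ^ 2 - 1|) := by
  rw [← energy_zero_left]
  exact (continuous_id.energy continuous_const).tendsto 0

theorem tendsto_sq_sub_self_div_energy (ht : t ≠ -1) :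
    Tendsto (fun ε => (t ^ 2 - t) / energy ε t) (𝓝 0) (𝓝 ((t ^ 2 - t) / |t ^ 2 - 1|)) := by
  by_cases h1 : t = 1
  -- both sides vanish at `t = 1`, the right-hand side being `0 / 0`
  · simp [h1]
  refine tendsto_const_nhds.div (tendsto_energy t) ?_
  rw [abs_ne_zero, sub_ne_zero, Ne, sq_eq_one_iff]
  tauto

theorem abs_sq_sub_self_div_energy_le (ht : 0 ≤ t) : |(t ^ 2 - t) / energy ε t| ≤ 1 := by
  rw [abs_div]
  refine div_le_one_of_le₀ ?_ (abs_nonneg _)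
  calc |t ^ 2 - t| = |t| * |t - 1| := by rw [← abs_mul]; ring_nf
    _ ≤ |t + 1| * |t - 1| := by gcongr; linarith
    _ = |t ^ 2 - 1| := by rw [← abs_mul]; ring_nf
    _ ≤ |energy ε t| := abs_le_energy.trans (le_abs_self _)

theorem integral_sq_sub_self_div_abs :
    ∫ t in 0..√2, ((t ^ 2 - t) / |t ^ 2 - 1| - 1) = 2 * log 2 - 2 - log (1 + √2) := by
  have h₁ : EqOn (fun t : ℝ => (t ^ 2 - t) / |t ^ 2 - 1| - 1) (fun t => (1 + t)⁻¹ - 2)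
      (uIoo 0 1) := by
    intro t ht
    rw [uIoo_of_le zero_le_one] at ht
    have : 1 - t ^ 2 ≠ 0 := by nlinarith [ht.1, ht.2]
    have : 1 + t ≠ 0 := by linarith [ht.1]
    simp only
    rw [abs_of_neg (by nlinarith [ht.1, ht.2]), neg_sub]
    field_simp
    ring
  have h₂ : EqOn (fun t : ℝ => (t ^ 2 - t) / |t ^ 2 - 1| - 1) (fun t => -(1 + t)⁻¹)
      (uIoo 1 √2) := by
    intro t ht
    rw [uIoo_of_le one_lt_sqrt_two.le] at ht
    have : t ^ 2 - 1 ≠ 0 := by nlinarith [ht.1]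
    have : 1 + t ≠ 0 := by linarith [ht.1]
    simp only
    rw [abs_of_pos (by nlinarith [ht.1])]
    field_simp
    ring
  have hinv : ∀ a b : ℝ, 0 ≤ a → 0 ≤ b → IntervalIntegrable (fun t : ℝ => (1 + t)⁻¹) volume a b :=
    fun a b ha hb => (ContinuousOn.inv₀ (by fun_prop) fun t ht => by
      linarith [(le_min ha hb).trans ht.1]).intervalIntegrable
  have hi₁ := (hinv 0 1 le_rfl zero_le_one).sub (intervalIntegrable_const (c := (2 : ℝ)))
  have hi₂ := (hinv 1 √2 zero_le_one (sqrt_nonneg 2)).neg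
  rw [← intervalIntegral.integral_add_adjacent_intervals (hi₁.congr_uIoo h₁.symm)
      (hi₂.congr_uIoo h₂.symm), intervalIntegral.integral_congr_uIoo h₁,
    intervalIntegral.integral_congr_uIoo h₂,
    intervalIntegral.integral_sub (hinv 0 1 le_rfl zero_le_one) intervalIntegrable_const,
    intervalIntegral.integral_neg, integral_inv_one_add (by norm_num) (by norm_num),
    integral_inv_one_add (by norm_num) (by linarith [sqrt_nonneg 2]),
    log_div (x := 1 + √2) (by positivity) (by norm_num)]
  norm_num
  ring

theorem tendsto_integral_sq_sub_self_div_energy :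
    Tendsto (fun ε => ∫ t in 0..√2, ((t ^ 2 - t) / energy ε t - 1)) (𝓝 0)
      (𝓝 (2 * log 2 - 2 - log (1 + √2))) := by
  rw [← integral_sq_sub_self_div_abs]
  refine intervalIntegral.tendsto_integral_filter_of_dominated_convergence (fun _ => 2)
    (.of_forall fun ε => (by fun_prop : Measurable _).aestronglyMeasurable)
    (.of_forall fun ε => ae_of_all _ fun t ht => ?_) intervalIntegrable_const
    (ae_of_all _ fun t ht => ?_)
  · rw [uIoc_of_le (sqrt_nonneg 2)] at ht
    have h := abs_sq_sub_self_div_energy_le (ε := ε) ht.1.le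
    rw [Real.norm_eq_abs]
    exact (abs_sub _ _).trans (by rw [abs_one]; linarith)
  · rw [uIoc_of_le (sqrt_nonneg 2)] at ht
    exact (tendsto_sq_sub_self_div_energy (by linarith [ht.1])).sub_const 1

theorem abs_sq_div_energy_sub_one_le (ht : 1 < t) (hε : |ε| ≤ 1) :
    |t ^ 2 / energy ε t - 1| ≤ (t ^ 2 - 1)⁻¹ := by
  have ht2 : 0 < t ^ 2 - 1 := by nlinarith
  have hlow : t ^ 2 - 1 ≤ energy ε t := (le_abs_self _).trans abs_le_energy
  have hE : 0 < energy ε t := ht2.trans_le hlow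
  have hup : energy ε t ≤ t ^ 2 := by
    have := (sq_le_one_iff_abs_le_one ε).2 hε
    rw [energy, sqrt_le_left (by positivity)]
    nlinarith
  rw [abs_of_nonneg (by rw [sub_nonneg, one_le_div hE]; exact hup)]
  calc t ^ 2 / energy ε t - 1 ≤ t ^ 2 / (t ^ 2 - 1) - 1 := by gcongr
    _ = (t ^ 2 - 1)⁻¹ := by field_simp; ring

theorem tendsto_integral_sq_div_energy_sub_one :
    Tendsto (fun ε => ∫ t in Ioi √2, (t ^ 2 / energy ε t - 1)) (𝓝 0) (𝓝 (log (1 + √2))) := by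
  have hlim : ∫ t in Ioi √2, (t ^ 2 - 1)⁻¹ = log (1 + √2) := by
    have h2 : (√2 + 1) / (√2 - 1) = (1 + √2) ^ 2 := by
      have := sub_pos.2 one_lt_sqrt_two
      field_simp
      nlinarith [sq_sqrt (zero_le_two (α := ℝ))]
    rw [integral_Ioi_inv_sq_sub_one one_lt_sqrt_two, h2, log_pow]
    ring
  rw [← hlim]
  refine tendsto_integral_filter_of_dominated_convergence _
    (.of_forall fun ε => (by fun_prop : Measurable _).aestronglyMeasurable) ?_
    (integrableOn_Ioi_inv_sq_sub_one one_lt_sqrt_two)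
    (ae_restrict_of_forall_mem measurableSet_Ioi fun t ht => ?_)
  · filter_upwards [Icc_mem_nhds (neg_lt_zero.2 one_pos) one_pos] with ε hε
    exact ae_restrict_of_forall_mem measurableSet_Ioi fun t ht =>
      abs_sq_div_energy_sub_one_le (one_lt_sqrt_two.trans ht) (abs_le.2 hε)
  · have ht2 : 0 < t ^ 2 - 1 := by nlinarith [one_lt_sqrt_two, mem_Ioi.1 ht]
    have h := ((tendsto_const_nhds (x := t ^ 2)).div (tendsto_energy t)
      (abs_pos.2 ht2.ne').ne').sub_const 1
    rwa [abs_of_pos ht2, div_sub_one ht2.ne', sub_sub_cancel, one_div] at h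

theorem radialIntegral_eq (hε₀ : 0 < ε) (hε₁ : ε ≤ 1) :
    radialIntegral ε = (∫ t in 0..√2, ((t ^ 2 - t) / energy ε t - 1)) + arsinh ε⁻¹ +
      ∫ t in Ioi √2, (t ^ 2 / energy ε t - 1) := by
  have hE : ∀ t, energy ε t ≠ 0 := fun t => (energy_pos hε₀.ne').ne'
  have htail : IntegrableOn (fun t => t ^ 2 / energy ε t - 1) (Ioi √2) :=
    (integrableOn_Ioi_inv_sq_sub_one one_lt_sqrt_two).mono'
      (by fun_prop : Measurable _).aestronglyMeasurable
      (ae_restrict_of_forall_mem measurableSet_Ioi fun t ht =>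
        abs_sq_div_energy_sub_one_le (one_lt_sqrt_two.trans ht) (abs_le.2 ⟨by linarith, hε₁⟩))
  rw [radialIntegral, ← intervalIntegral.integral_interval_add_Ioi'
    ((by fun_prop (disch := exact hE _) : Continuous _).intervalIntegrable _ _) htail,
    ← integral_div_energy hε₀, ← intervalIntegral.integral_add
      ((by fun_prop (disch := exact hE _) : Continuous _).intervalIntegrable _ _)
      ((by fun_prop (disch := exact hE _) : Continuous _).intervalIntegrable _ _)]
  congr 1
  refine intervalIntegral.integral_congr fun t _ => ?_
  rw [sub_div]
  ring

theorem tendsto_radialIntegral_add_log :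
    Tendsto (fun ε => radialIntegral ε + log ε) (𝓝[>] 0) (𝓝 (log 8 - 2)) := by
  have h := ((tendsto_integral_sq_sub_self_div_energy.mono_left nhdsWithin_le_nhds).add
    tendsto_arsinh_inv_add_log).add
    (tendsto_integral_sq_div_energy_sub_one.mono_left nhdsWithin_le_nhds)
  have hlog8 : log 8 = 3 * log 2 := by
    rw [show (8 : ℝ) = 2 ^ 3 by norm_num, log_pow]
    norm_num
  rw [show 2 * log 2 - 2 - log (1 + √2) + log 2 + log (1 + √2) = log 8 - 2 by
    rw [hlog8]; ring] at h
  refine h.congr' ?_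
  filter_upwards [Ioc_mem_nhdsGT one_pos] with ε hε
  rw [radialIntegral_eq hε.1 hε.2]
  ring

end MTilde

theorem mTilde_eq_inv_sqrt_mul_radialIntegral {μ : ℝ} (hμ : 0 < μ) (ϑ : ℝ) :
    mTilde μ ϑ = (√μ)⁻¹ * MTilde.radialIntegral (ϑ / μ) := by
  have hμ' : 0 < √μ := sqrt_pos.2 hμ
  have hpolar : ∫ r in Ioi (0 : ℝ), r ^ 2 • (1 / √((r ^ 2 - μ) ^ 2 + ϑ ^ 2) - 1 / r ^ 2) =
      ∫ r in Ioi (0 : ℝ), (r ^ 2 / √((r ^ 2 - μ) ^ 2 + ϑ ^ 2) - 1) :=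
    setIntegral_congr_fun measurableSet_Ioi fun r hr => by
      have : r ≠ 0 := (mem_Ioi.1 hr).ne'
      simp only [smul_eq_mul]
      field_simp
  have hscale := integral_comp_mul_left_Ioi'
    (fun r => r ^ 2 / √((r ^ 2 - μ) ^ 2 + ϑ ^ 2) - 1) 0 hμ'
  simp only [mul_zero, smul_eq_mul, mul_pow, sq_sqrt hμ.le] at hscale
  have hspherical := integral_fun_norm_euclideanSpace_fin_three
    fun r => 1 / √((r ^ 2 - μ) ^ 2 + ϑ ^ 2) - 1 / r ^ 2
  rw [mTilde, hspherical, smul_eq_mul, hpolar, ← hscale, MTilde.radialIntegral]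
  simp_rw [← MTilde.mul_energy_div hμ, mul_div_mul_left _ _ hμ.ne']
  field_simp
  rw [sq_sqrt hμ.le]

theorem stmt_6 (μ : ℝ) (hμ : 0 < μ) :
    Tendsto (fun ϑ : ℝ =>
        mTilde μ ϑ - (Real.sqrt μ)⁻¹ * (Real.log (μ / ϑ) - 2 + Real.log 8))
      (nhdsWithin 0 (Set.Ioi 0)) (nhds 0) := by
  have hdiv : Tendsto (fun ϑ => ϑ / μ) (𝓝[>] 0) (𝓝[>] 0) := by
    simpa using (continuous_id.div_const μ).continuousWithinAt.tendsto_nhdsWithin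
      (s := Ioi 0) (x := 0) (t := Ioi 0) fun ϑ hϑ => div_pos hϑ hμ
  have h := ((MTilde.tendsto_radialIntegral_add_log.comp hdiv).sub_const (log 8 - 2)).const_mul
    (√μ)⁻¹
  rw [sub_self, mul_zero] at h
  refine h.congr fun ϑ => ?_
  rw [Function.comp_apply, mTilde_eq_inv_sqrt_mul_radialIntegral hμ, ← inv_div, log_inv]
  ring
end

section
/- There exists a constant C > 0 such that for all a, b > 0, |sin(a)/a − sin(b)/b| ≤ C |a − b| / (a + b). -/
theorem stmt_9 :
    ∃ C : ℝ, 0 < C ∧ ∀ a b : ℝ, 0 < a → 0 < b →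
      |Real.sin a / a - Real.sin b / b| ≤ C * |a - b| / (a + b) := by
  refine ⟨4, by norm_num, ?_⟩
  have key : ∀ a b : ℝ, 0 < a → 0 < b → a ≤ b →
      |Real.sin a / a - Real.sin b / b| ≤ 4 * |a - b| / (a + b) := by
    intro a b ha hb hab
    have hsin : |Real.sin a - Real.sin b| ≤ |a - b| := by
      rw [Real.sin_sub_sin, abs_mul, abs_mul]
      have h1 : |Real.sin ((a - b) / 2)| ≤ |(a - b) / 2| := Real.abs_sin_le_abs
      have h2 : |Real.cos ((a + b) / 2)| ≤ 1 := Real.abs_cos_le_one _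
      have : |(a - b) / 2| = |a - b| / 2 := by rw [abs_div]; norm_num
      rw [this] at h1
      have h3 : |(2:ℝ)| = 2 := by norm_num
      rw [h3]
      nlinarith [abs_nonneg (Real.sin ((a - b) / 2)), abs_nonneg (a - b)]
    have hsa : |Real.sin a| ≤ a := by
      have := Real.abs_sin_le_abs (x := a)
      rwa [abs_of_pos ha] at this
    have h1 : Real.sin a / a - Real.sin b / b
        = ((b - a) * Real.sin a + a * (Real.sin a - Real.sin b)) / (a * b) := by
      field_simp; ring
    have hab' : |a - b| = b - a := by
      rw [abs_sub_comm]; exact abs_of_nonneg (by linarith)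
    rw [h1, hab', abs_div, abs_of_pos (mul_pos ha hb)]
    have hnum : |(b - a) * Real.sin a + a * (Real.sin a - Real.sin b)|
        ≤ (b - a) * a + a * (b - a) := by
      calc |(b - a) * Real.sin a + a * (Real.sin a - Real.sin b)|
          ≤ |(b - a) * Real.sin a| + |a * (Real.sin a - Real.sin b)| := abs_add_le _ _
        _ = (b - a) * |Real.sin a| + a * |Real.sin a - Real.sin b| := by
            rw [abs_mul, abs_mul, abs_of_nonneg (by linarith : (0:ℝ) ≤ b - a),
              abs_of_pos ha]
        _ ≤ (b - a) * a + a * (b - a) := by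
            have h2 : |Real.sin a - Real.sin b| ≤ b - a := by rw [← hab']; exact hsin
            have := mul_le_mul_of_nonneg_left hsa (by linarith : (0:ℝ) ≤ b - a)
            have := mul_le_mul_of_nonneg_left h2 ha.le
            linarith
    have hden : (0:ℝ) < a * b := mul_pos ha hb
    calc |(b - a) * Real.sin a + a * (Real.sin a - Real.sin b)| / (a * b)
        ≤ ((b - a) * a + a * (b - a)) / (a * b) := by
          gcongr
      _ ≤ 4 * (b - a) / (a + b) := by
          rw [div_le_div_iff₀ hden (by linarith)]
          nlinarith [mul_pos ha hb, sq_nonneg (a - b)]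
  intro a b ha hb
  rcases le_total a b with h | h
  · exact key a b ha hb h
  · have := key b a hb ha h
    rw [abs_sub_comm (Real.sin b / b), abs_sub_comm b a, add_comm b a] at this
    exact this
end

section
/- There exists a constant C > 0 such that for all a, b ≥ 0, |sin(a)/a − sin(b)/b| ≤ C |a − b| · min{1, 1/(a + b)}, where sin(0)/0 := 1. -/
noncomputable def sinc (t : ℝ) : ℝ := if t = 0 then 1 else Real.sin t / t

lemma sin_lip (x y : ℝ) : |Real.sin x - Real.sin y| ≤ |x - y| := by
  rw [Real.sin_sub_sin, abs_mul, abs_mul]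
  have h1 : |Real.sin ((x - y) / 2)| ≤ |(x - y) / 2| := Real.abs_sin_le_abs
  have h2 : |Real.cos ((x + y) / 2)| ≤ 1 := Real.abs_cos_le_one _
  calc |(2 : ℝ)| * |Real.sin ((x - y) / 2)| * |Real.cos ((x + y) / 2)|
      ≤ |(2 : ℝ)| * |(x - y) / 2| * 1 := by
        apply mul_le_mul _ h2 (abs_nonneg _) (by positivity)
        exact mul_le_mul_of_nonneg_left h1 (abs_nonneg _)
    _ = |x - y| := by rw [abs_div]; simp [abs_of_nonneg]; ring

lemma cos_lip (x y : ℝ) : |Real.cos x - Real.cos y| ≤ |x - y| := by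
  rw [Real.cos_sub_cos, abs_mul, abs_mul]
  have h1 : |Real.sin ((x - y) / 2)| ≤ |(x - y) / 2| := Real.abs_sin_le_abs
  have h2 : |Real.sin ((x + y) / 2)| ≤ 1 := Real.abs_sin_le_one _
  calc |(-2 : ℝ)| * |Real.sin ((x + y) / 2)| * |Real.sin ((x - y) / 2)|
      ≤ |(-2 : ℝ)| * 1 * |(x - y) / 2| := by
        apply mul_le_mul _ h1 (abs_nonneg _) (by positivity)
        exact mul_le_mul_of_nonneg_left h2 (abs_nonneg _)
    _ = |x - y| := by rw [abs_div]; simp [abs_of_nonneg]; ring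

lemma sinc_eq_integral (t : ℝ) : sinc t = ∫ s in (0:ℝ)..1, Real.cos (t * s) := by
  by_cases ht : t = 0
  · simp [sinc, ht]
  · rw [sinc, if_neg ht, intervalIntegral.integral_comp_mul_left _ ht]
    simp [integral_cos, div_eq_inv_mul]

lemma abs_sinc_le_one (t : ℝ) : |sinc t| ≤ 1 := by
  by_cases ht : t = 0
  · simp [sinc, ht]
  · rw [sinc, if_neg ht, abs_div, div_le_one (abs_pos.mpr ht)]
    exact Real.abs_sin_le_abs

lemma sinc_lip (a b : ℝ) : |sinc a - sinc b| ≤ |a - b| := by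
  rw [sinc_eq_integral, sinc_eq_integral]
  have h1 : IntervalIntegrable (fun s => Real.cos (a * s)) MeasureTheory.volume 0 1 :=
    (Real.continuous_cos.comp (continuous_const.mul continuous_id)).intervalIntegrable _ _
  have h2 : IntervalIntegrable (fun s => Real.cos (b * s)) MeasureTheory.volume 0 1 :=
    (Real.continuous_cos.comp (continuous_const.mul continuous_id)).intervalIntegrable _ _
  rw [← intervalIntegral.integral_sub h1 h2]
  have := intervalIntegral.norm_integral_le_of_norm_le_const
    (a := (0:ℝ)) (b := 1) (C := |a - b|)
    (f := fun s => Real.cos (a * s) - Real.cos (b * s)) ?_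
  · simpa using this
  · intro s hs
    rw [Set.uIoc_of_le (by norm_num : (0:ℝ) ≤ 1)] at hs
    have hs0 : 0 < s := hs.1
    have hs1 : s ≤ 1 := hs.2
    calc ‖Real.cos (a * s) - Real.cos (b * s)‖ ≤ |a * s - b * s| := cos_lip _ _
      _ = |a - b| * |s| := by rw [← abs_mul]; ring_nf
      _ ≤ |a - b| * 1 := by
          apply mul_le_mul_of_nonneg_left _ (abs_nonneg _)
          rw [abs_of_pos hs0]; exact hs1
      _ = |a - b| := mul_one _

lemma sinc_decay {a b : ℝ} (ha : 0 < a) (hab : a ≤ b) :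
    |sinc a - sinc b| ≤ (1 / a + 1 / a ^ 2) * (b - a) := by
  have hb : 0 < b := lt_of_lt_of_le ha hab
  rw [sinc, sinc, if_neg ha.ne', if_neg hb.ne']
  have key : Real.sin a / a - Real.sin b / b
      = (Real.sin a - Real.sin b) / a + Real.sin b * ((b - a) / (a * b)) := by
    field_simp; ring
  rw [key]
  have h1 : |(Real.sin a - Real.sin b) / a| ≤ (b - a) / a := by
    rw [abs_div, abs_of_pos ha]
    gcongr
    calc |Real.sin a - Real.sin b| ≤ |a - b| := sin_lip a b
      _ = b - a := by rw [abs_sub_comm, abs_of_nonneg (by linarith)]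
  have h2 : |Real.sin b * ((b - a) / (a * b))| ≤ (b - a) / a ^ 2 := by
    rw [abs_mul, abs_div, abs_of_nonneg (by linarith : (0:ℝ) ≤ b - a),
      abs_of_pos (mul_pos ha hb)]
    calc |Real.sin b| * ((b - a) / (a * b)) ≤ 1 * ((b - a) / (a * b)) := by
          exact mul_le_mul_of_nonneg_right (Real.abs_sin_le_one b) (div_nonneg (by linarith) (by positivity))
      _ = (b - a) / (a * b) := one_mul _
      _ ≤ (b - a) / a ^ 2 := by
          apply div_le_div_of_nonneg_left (by linarith) (by positivity)
          nlinarith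
  calc |(Real.sin a - Real.sin b) / a + Real.sin b * ((b - a) / (a * b))|
      ≤ |(Real.sin a - Real.sin b) / a| + |Real.sin b * ((b - a) / (a * b))| := abs_add_le _ _
    _ ≤ (b - a) / a + (b - a) / a ^ 2 := add_le_add h1 h2
    _ = (1 / a + 1 / a ^ 2) * (b - a) := by ring

lemma sinc_main {a b : ℝ} (ha : 0 ≤ a) (hb : 0 ≤ b) (hab : a ≤ b) :
    |sinc a - sinc b| ≤ 12 * |a - b| * min 1 (1 / (a + b)) := by
  have habs : |a - b| = b - a := by rw [abs_sub_comm, abs_of_nonneg (by linarith)]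
  rcases le_or_gt (a + b) 1 with hle | hgt
  · rcases eq_or_lt_of_le (by linarith : (0:ℝ) ≤ a + b) with h0 | h0
    · have ha0 : a = 0 := by linarith
      have hb0 : b = 0 := by linarith
      simp [ha0, hb0]
    · rw [min_eq_left (by rw [le_div_iff₀ h0]; linarith)]
      calc |sinc a - sinc b| ≤ |a - b| := sinc_lip a b
        _ ≤ 12 * |a - b| * 1 := by nlinarith [abs_nonneg (a - b)]
  · have hsum : 0 < a + b := by linarith
    rw [min_eq_right (by rw [div_le_one hsum]; linarith)]
    rcases le_or_gt b (2 * a) with hcase | hcase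
    · -- b ≤ 2a, so a ≥ (a+b)/3 and a > 1/3
      have ha3 : a + b ≤ 3 * a := by linarith
      have ha' : 0 < a := by linarith
      have h1a : 1 / a ≤ 3 / (a + b) := by
        rw [div_le_div_iff₀ ha' hsum]; linarith
      have h1a2 : 1 / a ^ 2 ≤ 9 / (a + b) := by
        have ha13 : 1 / 3 < a := by linarith
        have : 1 / a ^ 2 ≤ 3 / a := by
          rw [div_le_div_iff₀ (by positivity) ha']; nlinarith
        calc 1 / a ^ 2 ≤ 3 / a := this
          _ ≤ 9 / (a + b) := by rw [div_le_div_iff₀ ha' hsum]; linarith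
      calc |sinc a - sinc b| ≤ (1 / a + 1 / a ^ 2) * (b - a) := sinc_decay ha' hab
        _ ≤ (12 / (a + b)) * (b - a) := by
            apply mul_le_mul_of_nonneg_right _ (by linarith)
            have : (3:ℝ) / (a+b) + 9 / (a+b) = 12 / (a+b) := by ring
            linarith
        _ = 12 * |a - b| * (1 / (a + b)) := by rw [habs]; ring
    · -- b > 2a: b - a ≥ (a+b)/3
      have hba : (a + b) / 3 ≤ b - a := by linarith
      calc |sinc a - sinc b| ≤ |sinc a| + |sinc b| := abs_sub _ _
        _ ≤ 2 := by linarith [abs_sinc_le_one a, abs_sinc_le_one b]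
        _ ≤ 12 * |a - b| * (1 / (a + b)) := by
            rw [habs, mul_one_div, le_div_iff₀ hsum]
            nlinarith

theorem stmt_10 :
    ∃ C : ℝ, 0 < C ∧ ∀ a b : ℝ, 0 ≤ a → 0 ≤ b →
      |sinc a - sinc b| ≤ C * |a - b| * min 1 (1 / (a + b)) := by
  refine ⟨12, by norm_num, fun a b ha hb => ?_⟩
  rcases le_total a b with hab | hab
  · exact sinc_main ha hb hab
  · have := sinc_main hb ha hab
    rwa [abs_sub_comm, abs_sub_comm b a, add_comm b a] at this
end
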